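/- Let L be a linear endomorphism of a finite-dimensional real vector space, P a linear projection (P ∘ P = P), and Q = id − P. Then for all t ≥ 0, exp(t L) = exp(t (Q ∘ L)) + ∫₀ᵗ exp(s L) ∘ P ∘ L ∘ exp((t − s) (Q ∘ L)) ds (the Dyson identity). -/

import Mathlib

open NormedSpace intervalIntegral

/-!
Duhamel's formula: `s ↦ exp (s • A) * exp ((t - s) • B)` has derivative
`exp (s • A) * (A - B) * exp ((t - s) • B)`, so integrating from `0` to `t` compares
`exp (t • A)` with `exp (t • B)`. With `A = L` and `B = Q * L` the difference `A - B` is `P * L`.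
-/

section Duhamel

variable {𝔸 : Type*} [NormedRing 𝔸] [NormedAlgebra ℝ 𝔸] [CompleteSpace 𝔸]

theorem hasDerivAt_exp_smul_mul_exp_sub_smul (A B : 𝔸) (t s : ℝ) :
    HasDerivAt (fun s : ℝ => exp (s • A) * exp ((t - s) • B))
      (exp (s • A) * (A - B) * exp ((t - s) • B)) s := by
  have hB : HasDerivAt (fun s : ℝ => exp ((t - s) • B)) (-(B * exp ((t - s) • B))) s := by
    simpa [Function.comp_def] using
      (hasDerivAt_exp_smul_const' B (t - s)).scomp s ((hasDerivAt_id s).const_sub t)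
  refine ((hasDerivAt_exp_smul_const A s).mul hB).congr_deriv ?_
  rw [mul_sub, sub_mul, mul_neg, ← sub_eq_add_neg, mul_assoc _ B]

theorem continuous_exp_smul_mul_mul_exp_sub_smul (A C B : 𝔸) (t : ℝ) :
    Continuous fun s : ℝ => exp (s • A) * C * exp ((t - s) • B) := by
  have hB : Continuous fun s : ℝ => exp ((t - s) • B) :=
    (differentiable_exp_smul_const ℝ B).continuous.comp (continuous_const.sub continuous_id)
  exact ((differentiable_exp_smul_const ℝ A).continuous.mul continuous_const).mul hB

theorem exp_smul_eq_exp_smul_add_integral (A B : 𝔸) (t : ℝ) :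
    exp (t • A) = exp (t • B) + ∫ s in (0:ℝ)..t, exp (s • A) * (A - B) * exp ((t - s) • B) := by
  have hFTC := integral_eq_sub_of_hasDerivAt
    (fun s _ => hasDerivAt_exp_smul_mul_exp_sub_smul A B t s)
    ((continuous_exp_smul_mul_mul_exp_sub_smul A (A - B) B t).intervalIntegrable 0 t)
  rw [hFTC]
  simp only [sub_self, zero_smul, exp_zero, mul_one, one_mul, sub_zero]
  abel

end Duhamel

theorem dyson_identity_general
    {E : Type*} [NormedAddCommGroup E] [NormedSpace ℝ E] [FiniteDimensional ℝ E]
    (L P : E →L[ℝ] E) (Q : E →L[ℝ] E) (hQ : Q = 1 - P)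
    (t : ℝ) :
    exp (t • L) =
      exp (t • (Q * L)) +
        ∫ s in (0:ℝ)..t, exp (s • L) * P * L * exp ((t - s) • (Q * L)) := by
  have hPL : L - Q * L = P * L := by rw [hQ, sub_mul, one_mul, sub_sub_cancel]
  simpa only [hPL, mul_assoc] using exp_smul_eq_exp_smul_add_integral L (Q * L) t

/-- Dyson identity: for a linear endomorphism `L` of a finite-dimensional real vector
space and an idempotent `P` with `Q = 1 - P`, for all `t ≥ 0`,
`exp(t L) = exp(t (Q L)) + ∫₀ᵗ exp(s L) P L exp((t-s)(Q L)) ds`. -/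
theorem dyson_identity
    {E : Type*} [NormedAddCommGroup E] [NormedSpace ℝ E] [FiniteDimensional ℝ E]
    (L P : E →L[ℝ] E) (hP : P * P = P) (Q : E →L[ℝ] E) (hQ : Q = 1 - P)
    (t : ℝ) (ht : 0 ≤ t) :
    exp (t • L) =
      exp (t • (Q * L)) +
        ∫ s in (0:ℝ)..t, exp (s • L) * P * L * exp ((t - s) • (Q * L)) :=
  dyson_identity_general L P Q hQ t
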